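/- For every i ∈ {1, ..., n}, every polymorphism of the structure 𝔄 (of any arity k ≥ 1) is compatible with the equivalence relation α_i, regarded as a binary relation on A. -/
import Mathlib


/- The universe `A = {a, 0, 1, ..., n}` of size `n+2` is encoded as `Fin (n+2)`,
where `a` is encoded as `0` and the element `i ∈ {0, ..., n}` is encoded as `i+1`;
this encoding is order-preserving for the order `a < 0 < 1 < ⋯ < n`. -/

/-- A `k`-ary operation `t` is compatible with (preserves) an `r`-ary relation `S`:
applying `t` coordinatewise to `k` tuples from `S` yields a tuple in `S`. -/
def Compat {A : Type*} {k r : ℕ} (t : (Fin k → A) → A) (S : Set (Fin r → A)) : Prop :=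
  ∀ u : Fin k → Fin r → A, (∀ j, u j ∈ S) → (fun i => t fun j => u j i) ∈ S

/-- Compatibility with a unary relation `X`: `t` maps `X^k` into `X`. -/
def CompatUnary {A : Type*} {k : ℕ} (t : (Fin k → A) → A) (X : Set A) : Prop :=
  ∀ u : Fin k → A, (∀ j, u j ∈ X) → t u ∈ X

/-- Compatibility with a binary relation, given as a set of pairs. -/
def Compat2 {A : Type*} {k : ℕ} (t : (Fin k → A) → A) (S : Set (A × A)) : Prop :=
  ∀ u w : Fin k → A, (∀ j, (u j, w j) ∈ S) → (t u, t w) ∈ S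

/-- An operation `t : A^k → A` is a near-unanimity (NU) operation if `k ≥ 3` and
any tuple whose coordinates all equal `x` except possibly one coordinate (with
value `y`) is mapped to the majority value `x`. -/
def IsNU {A : Type*} {k : ℕ} (t : (Fin k → A) → A) : Prop :=
  3 ≤ k ∧ ∀ (x y : A) (j : Fin k), t (Function.update (fun _ => x) j y) = x

/-- The `(m+1)`-ary relation `S_i`: all tuples `(x_0, …, x_m)` with
`x_0 ∈ {a,0,…,i-1}` (encoded value `≤ i`) and `x_1, …, x_m ∈ {a, i}` (encoded value
`0` or `i+1`), except the tuple `(a, i, …, i)`, together with the constant tuples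
`(j, …, j)` for `j ∈ {i+1, …, n}` (encoded value `≥ i+2`). -/
def Srel (n m i : ℕ) : Set (Fin (m + 1) → Fin (n + 2)) :=
  {x | ((x 0).val ≤ i ∧ (∀ j, j ≠ 0 → ((x j).val = 0 ∨ (x j).val = i + 1)) ∧
          ¬((x 0).val = 0 ∧ ∀ j, j ≠ 0 → (x j).val = i + 1)) ∨
        (∃ c : Fin (n + 2), i + 2 ≤ c.val ∧ ∀ j, x j = c)}

/-- A polymorphism of the structure `𝔄 = (A; S_0, …, S_n, (X)_{∅ ≠ X ⊆ A})`:
an operation compatible with each `S_i` and with every nonempty unary relation. -/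
def PolyA (n m : ℕ) {k : ℕ} (t : (Fin k → Fin (n + 2)) → Fin (n + 2)) : Prop :=
  (∀ i ≤ n, Compat t (Srel n m i)) ∧
  (∀ X : Set (Fin (n + 2)), X.Nonempty → CompatUnary t X)

/-- The equivalence relation `α_i` on `A` with blocks `{a,0,…,i-1}, {i}, {i+1}, …, {n}`. -/
def alphaRel (n i : ℕ) : Set (Fin (n + 2) × Fin (n + 2)) :=
  {p | (p.1.val ≤ i ∧ p.2.val ≤ i) ∨ p.1 = p.2}

lemma mem_alpha {n i : ℕ} {p q : Fin (n + 2)} :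
    (p, q) ∈ alphaRel n i ↔ (p.val ≤ i ∧ q.val ≤ i) ∨ p.val = q.val := by
  simp [alphaRel, Fin.ext_iff]

lemma alpha_symm {n i : ℕ} {p q : Fin (n + 2)} (h : (p, q) ∈ alphaRel n i) :
    (q, p) ∈ alphaRel n i := by
  rw [mem_alpha] at h ⊢; omega

lemma alpha_trans {n i : ℕ} {p q r : Fin (n + 2)} (h1 : (p, q) ∈ alphaRel n i)
    (h2 : (q, r) ∈ alphaRel n i) : (p, r) ∈ alphaRel n i := by
  rw [mem_alpha] at h1 h2 ⊢; omega

lemma alpha_mono {n i : ℕ} {p q : Fin (n + 2)} (h : (p, q) ∈ alphaRel n i) :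
    (p, q) ∈ alphaRel n (i + 1) := by
  rw [mem_alpha] at h ⊢; omega

/-- The key single application of the relation `S_i`: for a "normalized" vector `v`
(entries with value `≤ i+1` are `0` or `i+1`), `t v` is `α_{i+1}`-related to
`t` of the collapsed vector. -/
lemma keyC (n m : ℕ) (hm : 2 ≤ m) (i k : ℕ)
    (t : (Fin k → Fin (n + 2)) → Fin (n + 2))
    (hS : Compat t (Srel n m i))
    (v : Fin k → Fin (n + 2))
    (hv : ∀ j, (v j).val ≤ i + 1 → (v j).val = 0 ∨ (v j).val = i + 1) :
    (t v, t (fun j => if (v j).val ≤ i + 1 then 0 else v j)) ∈ alphaRel n (i + 1) := by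
  classical
  set y : Fin k → Fin (n + 2) := fun j => if (v j).val ≤ i + 1 then 0 else v j with hy
  have hm1 : (1 : ℕ) < m + 1 := by omega
  have hm2 : (2 : ℕ) < m + 1 := by omega
  set U : Fin k → Fin (m + 1) → Fin (n + 2) :=
    fun j ℓ => if ℓ = ⟨1, hm1⟩ then v j else y j with hU
  have hyv : ∀ j, ¬ (v j).val ≤ i + 1 → y j = v j := by
    intro j hj; simp [hy, hj]
  have hy0 : ∀ j, (v j).val ≤ i + 1 → y j = 0 := by
    intro j hj; simp [hy, hj]
  have hrows : ∀ j, U j ∈ Srel n m i := by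
    intro j
    simp only [Srel, Set.mem_setOf_eq]
    by_cases hj : (v j).val ≤ i + 1
    · left
      have h0 : U j 0 = y j := by
        simp only [hU]
        rw [if_neg (by simp [Fin.ext_iff])]
      refine ⟨?_, ?_, ?_⟩
      · rw [h0, hy0 j hj]; simp
      · intro ℓ hℓ
        simp only [hU]
        by_cases hℓ1 : ℓ = ⟨1, hm1⟩
        · rw [if_pos hℓ1]; exact hv j hj
        · rw [if_neg hℓ1, hy0 j hj]; left; simp
      · rintro ⟨-, hall⟩
        have h2 := hall ⟨2, hm2⟩ (by simp [Fin.ext_iff])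
        simp only [hU] at h2
        rw [if_neg (by simp [Fin.ext_iff]), hy0 j hj] at h2
        simp at h2
    · right
      refine ⟨v j, by omega, fun ℓ => ?_⟩
      simp only [hU]
      by_cases hℓ1 : ℓ = ⟨1, hm1⟩
      · rw [if_pos hℓ1]
      · rw [if_neg hℓ1, hyv j hj]
  have hout := hS U hrows
  simp only [Srel, Set.mem_setOf_eq] at hout
  have hcol1 : (fun j => U j ⟨1, hm1⟩) = v := by
    funext j; simp only [hU, if_true]
  have hcol2 : (fun j => U j ⟨2, hm2⟩) = y := by
    funext j; simp only [hU]; rw [if_neg (by simp [Fin.ext_iff])]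
  rcases hout with ⟨-, hcoords, -⟩ | ⟨c, -, hconst⟩
  · have hA := hcoords ⟨1, hm1⟩ (by simp [Fin.ext_iff])
    have hB := hcoords ⟨2, hm2⟩ (by simp [Fin.ext_iff])
    rw [hcol1] at hA
    rw [hcol2] at hB
    rw [mem_alpha]; left; omega
  · have hA := hconst ⟨1, hm1⟩
    have hB := hconst ⟨2, hm2⟩
    rw [hcol1] at hA
    rw [hcol2] at hB
    rw [mem_alpha]; right; rw [hA, hB]

lemma main_aux (n m : ℕ) (hm : 2 ≤ m) (k : ℕ)
    (t : (Fin k → Fin (n + 2)) → Fin (n + 2))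
    (hS : ∀ i ≤ n, Compat t (Srel n m i)) :
    ∀ i, i ≤ n → Compat2 t (alphaRel n i) := by
  intro i
  induction i with
  | zero =>
    intro _ u w h
    have huw : u = w := by
      funext j
      have := h j
      rw [mem_alpha] at this
      exact Fin.ext (by omega)
    rw [huw]
    exact Or.inr rfl
  | succ i ih =>
    intro hin u w h
    classical
    set ρ : Fin (n + 2) → Fin (n + 2) := fun x => if x.val ≤ i then 0 else x with hρ
    set π : Fin (n + 2) → Fin (n + 2) := fun x => if x.val ≤ i + 1 then 0 else x with hπ
    have hρval : ∀ x : Fin (n + 2), (ρ x).val ≤ i + 1 → (ρ x).val = 0 ∨ (ρ x).val = i + 1 := by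
      intro x
      simp only [hρ]
      by_cases hx : x.val ≤ i
      · rw [if_pos hx]; simp
      · rw [if_neg hx]; omega
    have hρalpha : ∀ x : Fin (n + 2), (x, ρ x) ∈ alphaRel n i := by
      intro x
      rw [mem_alpha]
      simp only [hρ]
      by_cases hx : x.val ≤ i
      · rw [if_pos hx]; left; simp [hx]
      · rw [if_neg hx]; right; rfl
    have hπρ : ∀ x : Fin (n + 2), (if (ρ x).val ≤ i + 1 then (0 : Fin (n + 2)) else ρ x) = π x := by
      intro x
      simp only [hρ, hπ]
      by_cases hx : x.val ≤ i
      · rw [if_pos hx]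
        rw [if_pos (by simp), if_pos (by omega)]
      · rw [if_neg hx]
    -- key applications
    have hkeyu := keyC n m hm i k t (hS i (by omega)) (fun j => ρ (u j)) (fun j => hρval (u j))
    have hkeyw := keyC n m hm i k t (hS i (by omega)) (fun j => ρ (w j)) (fun j => hρval (w j))
    have hrwu : (fun j => if ((fun j => ρ (u j)) j).val ≤ i + 1 then (0 : Fin (n+2)) else (fun j => ρ (u j)) j)
        = fun j => π (u j) := by funext j; exact hπρ (u j)
    have hrww : (fun j => if ((fun j => ρ (w j)) j).val ≤ i + 1 then (0 : Fin (n+2)) else (fun j => ρ (w j)) j)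
        = fun j => π (w j) := by funext j; exact hπρ (w j)
    rw [hrwu] at hkeyu
    rw [hrww] at hkeyw
    have hπuw : (fun j => π (u j)) = fun j => π (w j) := by
      funext j
      have := h j
      rw [mem_alpha] at this
      simp only [hπ]
      rcases this with ⟨h1, h2⟩ | h1
      · rw [if_pos (by omega), if_pos (by omega)]
      · have : u j = w j := Fin.ext h1
        rw [this]
    have h1 : (t u, t (fun j => ρ (u j))) ∈ alphaRel n (i + 1) :=
      alpha_mono (ih (by omega) u (fun j => ρ (u j)) (fun j => hρalpha (u j)))
    have h2 : (t w, t (fun j => ρ (w j))) ∈ alphaRel n (i + 1) :=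
      alpha_mono (ih (by omega) w (fun j => ρ (w j)) (fun j => hρalpha (w j)))
    rw [hπuw] at hkeyu
    exact alpha_trans h1 (alpha_trans hkeyu (alpha_trans (alpha_symm hkeyw) (alpha_symm h2)))

/-- Every polymorphism of `𝔄` (of any arity `k ≥ 1`) is compatible with `α_i`,
for every `i ∈ {1, …, n}`. -/
theorem stmt3 (n m : ℕ) (hm : 2 ≤ m) (i : ℕ) (hi1 : 1 ≤ i) (hi2 : i ≤ n)
    (k : ℕ) (hk : 1 ≤ k) (t : (Fin k → Fin (n + 2)) → Fin (n + 2))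
    (ht : PolyA n m t) :
    Compat2 t (alphaRel n i) := by
  exact main_aux n m hm k t ht.1 i hi2
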